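/- arXiv:1704.04295 — 2 statements merged into one kernel-verified Lean document; each statement's English description precedes it below -/
import Mathlib

section
/- In diffusion on a graph, the potential P(t) = Σ_v w_v(t)·w_v(t+1) is non-increasing: P(t+1) ≤ P(t) for all t ≥ 0. -/
/-!
Write `a, b, c` for the labels at times `t, t+1, t+2`. Each step adds to `w_v` the net flow
`∑_u sgn(w_u - w_v)` over the neighbours `u` of `v`, so `P(t+1) - P(t) = ∑_v b_v (c_v - a_v)` is
`∑_v b_v ∑_u f(v,u)` for the antisymmetric edge function `f = sgn(b_u - b_v) + sgn(a_u - a_v)`.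
Pairing the terms of `uv` and `vu` turns this into `-½ ∑_{u,v} d (sgn d + sgn(a_u - a_v))` with
`d = b_u - b_v`, and `d · sgn d = |d|` dominates `|d · sgn(a_u - a_v)|`.
-/

open Finset Classical

/-- One step of the diffusion process: each vertex gains one chip from each
neighbour with a strictly larger label and loses one chip to each neighbour
with a strictly smaller label. -/
noncomputable def diffStep {n : ℕ} (G : SimpleGraph (Fin n)) (w : Fin n → ℤ) : Fin n → ℤ :=
  fun v => w v + ((Finset.univ.filter fun u => G.Adj v u ∧ w v < w u).card : ℤ)
             - ((Finset.univ.filter fun u => G.Adj v u ∧ w u < w v).card : ℤ)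

/-- The labelling at time `t` of the diffusion process started from `w0`. -/
noncomputable def diff {n : ℕ} (G : SimpleGraph (Fin n)) (w0 : Fin n → ℤ) (t : ℕ) : Fin n → ℤ :=
  (diffStep G)^[t] w0

/-- The potential `P(t) = ∑_v w_v(t) · w_v(t+1)`. -/
noncomputable def pot {n : ℕ} (G : SimpleGraph (Fin n)) (w0 : Fin n → ℤ) (t : ℕ) : ℤ :=
  ∑ v, diff G w0 t v * diff G w0 (t + 1) v

/-- `x_{uv}(t) = sgn(w_u(t) - w_v(t))` for edges, `0` for non-edges. -/
noncomputable def xlab {n : ℕ} (G : SimpleGraph (Fin n)) (w0 : Fin n → ℤ)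
    (u v : Fin n) (t : ℕ) : ℤ :=
  if G.Adj u v then Int.sign (diff G w0 t u - diff G w0 t v) else 0

/-- `y_{uv}(t) = sgn(w_u(t+1) - w_v(t+1))` for edges, `0` for non-edges. -/
noncomputable def ylab {n : ℕ} (G : SimpleGraph (Fin n)) (w0 : Fin n → ℤ)
    (u v : Fin n) (t : ℕ) : ℤ :=
  if G.Adj u v then Int.sign (diff G w0 (t + 1) u - diff G w0 (t + 1) v) else 0

/-- The label `(x_{uv}(t), y_{uv}(t))` of the edge `uv` at time `t`. -/
noncomputable def elabel {n : ℕ} (G : SimpleGraph (Fin n)) (w0 : Fin n → ℤ)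
    (u v : Fin n) (t : ℕ) : ℤ × ℤ :=
  (xlab G w0 u v t, ylab G w0 u v t)

theorem Finset.sum_mul_sum_nonpos_of_antisymm {ι R : Type*} [Fintype ι] [CommRing R]
    [LinearOrder R] [IsStrictOrderedRing R] (b : ι → R) (f : ι → ι → R)
    (hf : ∀ u v, f u v = -f v u) (hbf : ∀ u v, 0 ≤ (b u - b v) * f v u) :
    ∑ v, b v * ∑ u, f v u ≤ 0 := by
  have hswap : ∑ v, ∑ u, b v * f v u = -∑ v, ∑ u, b u * f v u :=
    calc ∑ v, ∑ u, b v * f v u = ∑ v, ∑ u, b u * f u v := Finset.sum_comm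
      _ = -∑ v, ∑ u, b u * f v u := by simp only [← Finset.sum_neg_distrib, ← mul_neg, ← hf]
  have hpairs : 0 ≤ ∑ v, ∑ u, (b u - b v) * f v u :=
    Finset.sum_nonneg fun v _ => Finset.sum_nonneg fun u _ => hbf u v
  simp_rw [sub_mul, Finset.sum_sub_distrib] at hpairs
  simp_rw [Finset.mul_sum]
  linarith

theorem Int.mul_sign_add_sign_nonneg (d e : ℤ) : 0 ≤ d * (d.sign + e.sign) := by
  rw [mul_add, mul_comm d, Int.sign_mul_self_eq_abs]
  rcases lt_trichotomy e 0 with he | rfl | he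
  · rw [Int.sign_eq_neg_one_of_neg he, mul_neg_one]; linarith [le_abs_self d]
  · simp
  · rw [Int.sign_eq_one_of_pos he, mul_one]; linarith [neg_abs_le d]

section Diffusion

variable {n : ℕ} (G : SimpleGraph (Fin n))

/-- The net number of chips `v` receives from `u` in one diffusion step from labelling `w`. -/
noncomputable def netFlow (w : Fin n → ℤ) (v u : Fin n) : ℤ :=
  if G.Adj v u then (w u - w v).sign else 0

theorem netFlow_antisymm (w : Fin n → ℤ) (u v : Fin n) : netFlow G w u v = -netFlow G w v u := by
  unfold netFlow
  rw [G.adj_comm]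
  split_ifs
  · rw [← Int.sign_neg, neg_sub]
  · simp

theorem diffStep_apply (w : Fin n → ℤ) (v : Fin n) :
    diffStep G w v = w v + ∑ u, netFlow G w v u := by
  simp only [diffStep, netFlow, Finset.card_filter, Nat.cast_sum, Nat.cast_ite, Nat.cast_one,
    Nat.cast_zero, add_sub_assoc, ← Finset.sum_sub_distrib]
  congr 1
  refine Finset.sum_congr rfl fun u _ => ?_
  by_cases hvu : G.Adj v u
  · rcases lt_trichotomy (w v) (w u) with h | h | h
    · simp [hvu, h, h.not_gt, Int.sign_eq_one_of_pos (sub_pos.2 h)]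
    · simp [h]
    · simp [hvu, h, h.not_gt, Int.sign_eq_neg_one_of_neg (sub_neg.2 h)]
  · simp [hvu]

theorem diff_succ (w0 : Fin n → ℤ) (t : ℕ) : diff G w0 (t + 1) = diffStep G (diff G w0 t) :=
  Function.iterate_succ_apply' _ _ _

theorem pot_succ_sub_pot (w0 : Fin n → ℤ) (t : ℕ) :
    pot G w0 (t + 1) - pot G w0 t = ∑ v, diff G w0 (t + 1) v *
      ∑ u, (netFlow G (diff G w0 (t + 1)) v u + netFlow G (diff G w0 t) v u) := by
  simp only [pot, ← Finset.sum_sub_distrib, Finset.sum_add_distrib]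
  refine Finset.sum_congr rfl fun v _ => ?_
  rw [diff_succ G w0 (t + 1), diffStep_apply, diff_succ G w0 t, diffStep_apply]
  ring

end Diffusion

theorem stmt5 {n : ℕ} (G : SimpleGraph (Fin n)) (w0 : Fin n → ℤ) (t : ℕ) :
    pot G w0 (t + 1) ≤ pot G w0 t := by
  set a := diff G w0 t
  set b := diff G w0 (t + 1)
  have hdecrease : ∑ v, b v * ∑ u, (netFlow G b v u + netFlow G a v u) ≤ 0 := by
    refine Finset.sum_mul_sum_nonpos_of_antisymm b _ (fun u v => ?_) (fun u v => ?_)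
    · rw [netFlow_antisymm G b, netFlow_antisymm G a, neg_add]
    · by_cases hvu : G.Adj v u
      · simpa only [netFlow, if_pos hvu] using Int.mul_sign_add_sign_nonneg (b u - b v) (a u - a v)
      · simp [netFlow, hvu]
  linarith [pot_succ_sub_pot G w0 t]
end

section
/- Diffusion on any finite graph from any integer initial configuration is eventually periodic with period dividing 2: there exists T such that w_G(t+2) = w_G(t) for all t ≥ T. -/
open Finset Classical

/-!
Let `x_{uv}(t) ∈ {0, ±1}` be the flow of chips from `u` to `v` at time `t`. The potential
`P(t) = ∑_v w_v(t) w_v(t+1)` satisfies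
`2 (P(t+1) - P(t)) = ∑_{u,v} (w_v(t+1) - w_u(t+1)) (x_{uv}(t) + x_{uv}(t+1))`, and every term is
`≤ 0` because `x_{uv}(t+1)` has the sign of `w_u(t+1) - w_v(t+1)`. As every vertex moves by at
most `n` per step, `P ≥ -n³`, so `P` is eventually constant and then every term vanishes: a
nonzero flow on an edge is preceded by the opposite flow. So the flow on each edge is eventually
either zero forever or alternating, and `w(t+2) = w(t) + ∑_u (x_{uv}(t) + x_{uv}(t+1)) = w(t)`.
-/

open Filter

theorem Int.mul_sign_add_sign_nonneg_s14 (a b : ℤ) : 0 ≤ a * (b.sign + a.sign) := by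
  rcases Int.sign_trichotomy b with hb | hb | hb <;> rcases lt_trichotomy a 0 with ha | ha | ha <;>
    simp only [hb, ha, Int.sign_eq_neg_one_of_neg, Int.sign_eq_one_of_pos, Int.sign_zero] <;> omega

theorem two_mul_sum_mul_eq_sum_sub_mul {ι R : Type*} [Fintype ι] [CommRing R] (f : ι → R)
    (c : ι → ι → R) (hc : ∀ u v, c v u = -c u v) :
    2 * ∑ v, ∑ u, f v * c u v = ∑ v, ∑ u, (f v - f u) * c u v := by
  have hswap : ∑ v, ∑ u, f u * c u v = -∑ v, ∑ u, f v * c u v := by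
    rw [Finset.sum_comm, ← Finset.sum_neg_distrib]
    refine Finset.sum_congr rfl fun u _ => ?_
    rw [← Finset.sum_neg_distrib]
    exact Finset.sum_congr rfl fun v _ => by rw [hc v u, mul_neg]
  simp only [sub_mul, Finset.sum_sub_distrib, hswap]
  ring

theorem eventually_add_succ_eq_zero {A : Type*} [AddGroup A] {s : ℕ → A} {T : ℕ}
    (hs : ∀ t, T ≤ t → s (t + 1) ≠ 0 → s t = -s (t + 1)) :
    ∀ᶠ t in atTop, s t + s (t + 1) = 0 := by
  by_cases hz : ∃ m, T ≤ m ∧ s m = 0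
  · obtain ⟨m, hTm, hm⟩ := hz
    have hzero : ∀ t, m ≤ t → s t = 0 := by
      intro t ht
      induction t, ht using Nat.le_induction with
      | base => exact hm
      | succ t hmt ih =>
        by_contra h
        exact h (neg_eq_zero.mp ((hs t (hTm.trans hmt) h).symm.trans ih))
    filter_upwards [eventually_ge_atTop m] with t ht
    rw [hzero t ht, hzero (t + 1) (by omega), add_zero]
  · push Not at hz
    filter_upwards [eventually_ge_atTop T] with t ht
    rw [hs t ht (hz (t + 1) (by omega)), neg_add_cancel]

theorem Int.exists_forall_ge_eq_of_antitone {f : ℕ → ℤ} (hf : Antitone f) {C : ℤ}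
    (hC : ∀ t, C ≤ f t) : ∃ T, ∀ t, T ≤ t → f t = f T := by
  obtain ⟨T, hT⟩ := WellFoundedLT.antitone_chain_condition (f := fun t => (f t - C).toNat)
    fun a b hab => Int.toNat_le_toNat (by linarith [hf hab])
  refine ⟨T, fun t ht => ?_⟩
  have := hT t ht
  have := hC t
  have := hC T
  omega

section Diffusion

variable {n : ℕ} (G : SimpleGraph (Fin n)) (w0 : Fin n → ℤ)

theorem xlab_swap (u v : Fin n) (t : ℕ) : xlab G w0 v u t = -xlab G w0 u v t := by
  unfold xlab
  by_cases h : G.Adj u v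
  · rw [if_pos h, if_pos h.symm, ← Int.sign_neg, neg_sub]
  · rw [if_neg h, if_neg (mt SimpleGraph.Adj.symm h), neg_zero]

theorem abs_xlab_le_one (u v : Fin n) (t : ℕ) : |xlab G w0 u v t| ≤ 1 := by
  unfold xlab
  split_ifs
  · rcases Int.sign_trichotomy (diff G w0 t u - diff G w0 t v) with h | h | h <;> simp [h]
  · simp

theorem diff_ne_of_xlab_ne_zero {u v : Fin n} {t : ℕ} (h : xlab G w0 u v t ≠ 0) :
    diff G w0 t u ≠ diff G w0 t v := by
  contrapose! h
  simp [xlab, h]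

theorem diff_succ_apply (t : ℕ) (v : Fin n) :
    diff G w0 (t + 1) v = diff G w0 t v + ∑ u, xlab G w0 u v t := by
  have hx : ∀ u, xlab G w0 u v t =
      (if G.Adj v u ∧ diff G w0 t v < diff G w0 t u then 1 else 0) -
        (if G.Adj v u ∧ diff G w0 t u < diff G w0 t v then 1 else 0) := by
    intro u
    rw [xlab, G.adj_comm]
    by_cases h : G.Adj v u
    · rcases lt_trichotomy (diff G w0 t u) (diff G w0 t v) with h' | h' | h' <;>
        simp [h, h', h'.not_gt, Int.sign_eq_neg_one_of_neg, Int.sign_eq_one_of_pos]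
    · simp [h]
  rw [diff, Function.iterate_succ_apply', ← diff, diffStep]
  simp only [hx, Finset.sum_sub_distrib, Finset.sum_boole]
  ring

theorem diff_add_two_apply (t : ℕ) (v : Fin n) :
    diff G w0 (t + 2) v = diff G w0 t v + ∑ u, (xlab G w0 u v t + xlab G w0 u v (t + 1)) := by
  rw [Finset.sum_add_distrib, ← add_assoc, ← diff_succ_apply, ← diff_succ_apply]

theorem abs_diff_succ_sub_le (t : ℕ) (v : Fin n) :
    |diff G w0 (t + 1) v - diff G w0 t v| ≤ n := by
  rw [diff_succ_apply, add_sub_cancel_left]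
  calc |∑ u, xlab G w0 u v t| ≤ ∑ u, |xlab G w0 u v t| := Finset.abs_sum_le_sum_abs _ _
    _ ≤ ∑ _u : Fin n, 1 := Finset.sum_le_sum fun u _ => abs_xlab_le_one G w0 u v t
    _ = n := by simp

theorem neg_pow_three_le_pot (t : ℕ) : -(n : ℤ) ^ 3 ≤ pot G w0 t := by
  calc -(n : ℤ) ^ 3 = ∑ _v : Fin n, -(n : ℤ) ^ 2 := by simp; ring
    _ ≤ pot G w0 t := Finset.sum_le_sum fun v _ => by
      obtain ⟨hlo, hhi⟩ := abs_le.mp (abs_diff_succ_sub_le G w0 t v)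
      -- `4ab = (a + b)² - (a - b)²`
      nlinarith [sq_nonneg (diff G w0 t v + diff G w0 (t + 1) v)]

theorem two_mul_pot_succ_sub (t : ℕ) :
    2 * (pot G w0 (t + 1) - pot G w0 t) = ∑ v, ∑ u,
      (diff G w0 (t + 1) v - diff G w0 (t + 1) u) *
        (xlab G w0 u v t + xlab G w0 u v (t + 1)) := by
  rw [← two_mul_sum_mul_eq_sum_sub_mul _ _ fun u v => by simp only [xlab_swap G w0 u v]; ring]
  congr 1
  simp only [pot, ← Finset.sum_sub_distrib]
  refine Finset.sum_congr rfl fun v _ => ?_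
  rw [← Finset.mul_sum, show t + 1 + 1 = t + 2 from rfl, diff_add_two_apply]
  ring

theorem sub_mul_xlab_add_xlab_succ_nonpos (u v : Fin n) (t : ℕ) :
    (diff G w0 (t + 1) v - diff G w0 (t + 1) u) *
      (xlab G w0 u v t + xlab G w0 u v (t + 1)) ≤ 0 := by
  unfold xlab
  split_ifs
  · rw [← neg_sub, neg_mul, neg_nonpos]
    exact Int.mul_sign_add_sign_nonneg_s14 _ _
  · simp

theorem pot_succ_le (t : ℕ) : pot G w0 (t + 1) ≤ pot G w0 t := by
  have := (two_mul_pot_succ_sub G w0 t).trans_le <| Finset.sum_nonpos fun v _ =>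
    Finset.sum_nonpos fun u _ => sub_mul_xlab_add_xlab_succ_nonpos G w0 u v t
  linarith

theorem xlab_eq_neg_xlab_succ_of_pot_succ_eq {t : ℕ} (ht : pot G w0 (t + 1) = pot G w0 t)
    {u v : Fin n} (huv : xlab G w0 u v (t + 1) ≠ 0) :
    xlab G w0 u v t = -xlab G w0 u v (t + 1) := by
  have hsum := two_mul_pot_succ_sub G w0 t
  rw [ht, sub_self, mul_zero, eq_comm, Finset.sum_eq_zero_iff_of_nonpos fun v _ =>
    Finset.sum_nonpos fun u _ => sub_mul_xlab_add_xlab_succ_nonpos G w0 u v t] at hsum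
  have hterm := (Finset.sum_eq_zero_iff_of_nonpos fun u _ =>
    sub_mul_xlab_add_xlab_succ_nonpos G w0 u v t).mp (hsum v (Finset.mem_univ v)) u
      (Finset.mem_univ u)
  have hne : diff G w0 (t + 1) v - diff G w0 (t + 1) u ≠ 0 :=
    sub_ne_zero.mpr (diff_ne_of_xlab_ne_zero G w0 huv).symm
  exact eq_neg_of_add_eq_zero_left ((mul_eq_zero.mp hterm).resolve_left hne)

end Diffusion

theorem stmt14 {n : ℕ} (G : SimpleGraph (Fin n)) (w0 : Fin n → ℤ) :
    ∃ T : ℕ, ∀ t : ℕ, T ≤ t → diff G w0 (t + 2) = diff G w0 t := by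
  obtain ⟨T, hT⟩ := Int.exists_forall_ge_eq_of_antitone
    (antitone_nat_of_succ_le (pot_succ_le G w0)) (neg_pow_three_le_pot G w0)
  have halt : ∀ u v, ∀ᶠ t in atTop, xlab G w0 u v t + xlab G w0 u v (t + 1) = 0 :=
    fun u v => eventually_add_succ_eq_zero fun t ht =>
      xlab_eq_neg_xlab_succ_of_pot_succ_eq G w0 ((hT (t + 1) (by omega)).trans (hT t ht).symm)
  obtain ⟨T', hT'⟩ :=
    eventually_atTop.mp (eventually_all.mpr fun u => eventually_all.mpr (halt u))
  refine ⟨T', fun t ht => funext fun v => ?_⟩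
  rw [diff_add_two_apply, Finset.sum_eq_zero fun u _ => hT' t ht u v, add_zero]
end
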